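/- For a permutation f of a finite set with n elements and any integer k with k ≥ 4n ≥ 77, we have |H_{f,k} − H_{f,∞}| ≤ 3n·log₂(n)/k. -/

import Mathlib

open scoped Classical

/-- `itN f k x y` counts the iterates `j < k` with `f^[j] x = y`. -/
noncomputable def itN {X : Type*} (f : X → X) (k : ℕ) (x y : X) : ℕ :=
  ((Finset.range k).filter (fun j => f^[j] x = y)).card

/-- The (shifted) iteration entropy `H_{f,k}`. -/
noncomputable def itH (X : Type*) [Fintype X] (f : X → X) (k : ℕ) : ℝ :=
  (1 / ((k : ℝ) * (Fintype.card X : ℝ))) *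
    ∑ x : X, ∑ y : X, (itN f k x y : ℝ) * Real.logb 2 ((k : ℝ) / (itN f k x y : ℝ))

/-!
Fix a starting point `x` of period `c` and put `q = ⌊k / c⌋`. The iterates `f^[j] x`, `j < k`,
run around the orbit of `x`, each orbit point being hit `N = q` or `q + 1` times. Rewriting the
`y`-sum as a sum over `j < k`, the contribution of `x` to `H_{f,k}` minus `log₂ c` is the average
of `log₂ (k / (c N))`, and `q c ≤ k < (q + 1) c` puts `k / (c N)` between `q / (q + 1)` and
`(q + 1) / q`, so every term is at most `1 / (q log 2) < 2 / q` in absolute value. As `k ≥ 4n`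
gives `q ≥ 2`, this is at most `3c / k ≤ 3n / k`, and `H_{f,∞}` is the average of `log₂ c`.
-/

open Finset Function Real

lemma Finset.sum_card_filter_nsmul_eq_sum {ι κ M : Type*} [Fintype κ] [AddCommMonoid M]
    (s : Finset ι) (g : ι → κ) (φ : ℕ → M) :
    ∑ y, #{i ∈ s | g i = y} • φ #{i ∈ s | g i = y} =
      ∑ i ∈ s, φ #{j ∈ s | g j = g i} := by
  rw [← sum_fiberwise' s g (fun y => φ #{j ∈ s | g j = y})]
  simp only [sum_const]

lemma Finset.abs_sum_div_card_le {ι : Type*} {s : Finset ι} {a : ι → ℝ} {B : ℝ}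
    (hs : s.Nonempty) (h : ∀ i ∈ s, |a i| ≤ B) : |(∑ i ∈ s, a i) / #s| ≤ B := by
  rw [abs_div, Nat.abs_cast, div_le_iff₀ (by exact_mod_cast hs.card_pos)]
  calc |∑ i ∈ s, a i| ≤ ∑ i ∈ s, |a i| := abs_sum_le_sum_abs _ _
    _ ≤ #s • B := sum_le_card_nsmul _ _ _ h
    _ = B * #s := by rw [nsmul_eq_mul, mul_comm]

lemma Real.abs_log_le_of_le_one_add {t ε : ℝ} (ht : 0 < t) (h₁ : t ≤ 1 + ε)
    (h₂ : t⁻¹ ≤ 1 + ε) : |log t| ≤ ε := by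
  have hinv := log_le_sub_one_of_pos (inv_pos.2 ht)
  rw [log_inv] at hinv
  rw [abs_le]
  constructor <;> linarith [log_le_sub_one_of_pos ht]

lemma abs_log_div_mul_le {k c N : ℕ} (hc : 0 < c) (hq : 0 < k / c) (hN₁ : k / c ≤ N)
    (hN₂ : N ≤ k / c + 1) : |log (k / (c * N))| ≤ 1 / (k / c : ℕ) := by
  set q := k / c
  have hqk : (q : ℝ) * c ≤ k := by exact_mod_cast Nat.div_mul_le_self k c
  have hkq : (k : ℝ) < c * (q + 1) := by exact_mod_cast Nat.lt_mul_div_succ k hc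
  have hq' : (0 : ℝ) < q := by exact_mod_cast hq
  have hN₁' : (q : ℝ) ≤ N := by exact_mod_cast hN₁
  have hN₂' : (N : ℝ) ≤ q + 1 := by exact_mod_cast hN₂
  have hc' : (0 : ℝ) < c := by exact_mod_cast hc
  have hk : (0 : ℝ) < k := by nlinarith
  have hN : (0 : ℝ) < N := by linarith
  apply Real.abs_log_le_of_le_one_add (by positivity)
  · rw [div_le_iff₀ (by positivity), one_add_div hq'.ne', div_mul_eq_mul_div, le_div_iff₀ hq']
    nlinarith
  · rw [inv_div, div_le_iff₀ hk, one_add_div hq'.ne', div_mul_eq_mul_div, le_div_iff₀ hq']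
    nlinarith

lemma one_div_mul_log_two_le {k c n : ℕ} (hc : 0 < c) (hck : 2 * c ≤ k) (hcn : c ≤ n)
    (hn : 2 ≤ n) : 1 / ((k / c : ℕ) * log 2) ≤ 3 * n * logb 2 n / k := by
  set q := k / c
  have hq : 2 ≤ q := (Nat.le_div_iff_mul_le hc).2 hck
  have hkq : (k : ℝ) < c * (q + 1) := by exact_mod_cast Nat.lt_mul_div_succ k hc
  have hq' : (2 : ℝ) ≤ q := by exact_mod_cast hq
  have hk : (0 : ℝ) < k := by exact_mod_cast (by omega : 0 < k)
  have hcn' : (c : ℝ) ≤ n := by exact_mod_cast hcn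
  have hlogb : 1 ≤ logb 2 (n : ℝ) := by
    rw [le_logb_iff_rpow_le one_lt_two (by positivity), rpow_one]
    exact_mod_cast hn
  calc 1 / ((q : ℝ) * log 2) ≤ 2 / q := by
        rw [div_le_div_iff₀ (by positivity) (by positivity)]
        nlinarith [log_two_gt_d9]
    _ ≤ 3 * c / k := by
        rw [div_le_div_iff₀ (by positivity) hk]
        nlinarith
    _ ≤ 3 * n * logb 2 n / k := div_le_div_of_nonneg_right (by nlinarith) hk.le

section

variable {X : Type*}

lemma sum_itN_mul_eq_sum_range [Fintype X] (f : X → X) (k : ℕ) (x : X) (φ : ℕ → ℝ) :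
    ∑ y, (itN f k x y : ℝ) * φ (itN f k x y) =
      ∑ j ∈ range k, φ (itN f k x (f^[j] x)) := by
  unfold itN
  simpa only [nsmul_eq_mul] using
    sum_card_filter_nsmul_eq_sum (range k) (fun j => f^[j] x) φ

lemma Function.iterate_eq_iterate_iff_modEq {f : X → X} {x : X} (hx : x ∈ periodicPts f)
    {i j : ℕ} : f^[i] x = f^[j] x ↔ i ≡ j [MOD minimalPeriod f x] := by
  have hc := minimalPeriod_pos_of_mem_periodicPts hx
  rw [← iterate_mod_minimalPeriod_eq (n := i), ← iterate_mod_minimalPeriod_eq (n := j),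
    iterate_eq_iterate_iff_of_lt_minimalPeriod (Nat.mod_lt _ hc) (Nat.mod_lt _ hc)]
  rfl

lemma itN_iterate_eq (f : X → X) {x : X} (hx : x ∈ periodicPts f) (k j : ℕ) :
    itN f k x (f^[j] x) = k / minimalPeriod f x +
      if j % minimalPeriod f x < k % minimalPeriod f x then 1 else 0 := by
  rw [← Nat.count_modEq_card _ (minimalPeriod_pos_of_mem_periodicPts hx),
    Nat.count_eq_card_filter_range, itN]
  congr 1
  ext i
  simp [iterate_eq_iterate_iff_modEq hx]

noncomputable def itHAt [Fintype X] (f : X → X) (k : ℕ) (x : X) : ℝ :=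
  (1 / (k : ℝ)) * ∑ y, (itN f k x y : ℝ) * logb 2 (k / itN f k x y)

lemma itH_eq_sum_itHAt_div [Fintype X] (f : X → X) (k : ℕ) :
    itH X f k = (∑ x, itHAt f k x) / Fintype.card X := by
  simp only [itH, itHAt, sum_div, mul_sum]
  exact sum_congr rfl fun x _ => sum_congr rfl fun y _ => by ring

lemma abs_itHAt_sub_logb_minimalPeriod_le [Fintype X] (f : X → X) {x : X}
    (hx : x ∈ periodicPts f) {k : ℕ} (hk : minimalPeriod f x ≤ k) :
    |itHAt f k x - logb 2 (minimalPeriod f x)| ≤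
      1 / ((k / minimalPeriod f x : ℕ) * log 2) := by
  have hN : ∀ j, k / minimalPeriod f x ≤ itN f k x (f^[j] x) ∧
      itN f k x (f^[j] x) ≤ k / minimalPeriod f x + 1 := by
    intro j
    rw [itN_iterate_eq f hx]
    split_ifs <;> omega
  set c := minimalPeriod f x
  have hc : 0 < c := minimalPeriod_pos_of_mem_periodicPts hx
  have hk' : (k : ℝ) ≠ 0 := by exact_mod_cast (hc.trans_le hk).ne'
  have hsplit : itHAt f k x - logb 2 c =
      (∑ j ∈ range k, log (k / (c * itN f k x (f^[j] x))) / log 2) / #(range k) := by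
    have hterm : ∀ j ∈ range k, log (k / (c * itN f k x (f^[j] x))) / log 2 =
        logb 2 (k / itN f k x (f^[j] x)) - logb 2 c := by
      intro j _
      have hNj : (itN f k x (f^[j] x) : ℝ) ≠ 0 := by
        exact_mod_cast (Nat.div_pos hk hc).trans_le (hN j).1 |>.ne'
      rw [← logb_div (by positivity) (by positivity), div_div, mul_comm, logb]
    rw [itHAt, sum_itN_mul_eq_sum_range f k x (fun N => logb 2 (k / N)), card_range,
      sum_congr rfl hterm, sum_sub_distrib, sum_const, card_range, nsmul_eq_mul]
    field_simp
  rw [hsplit]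
  refine abs_sum_div_card_le (nonempty_range_iff.2 (by omega)) fun j _ => ?_
  rw [abs_div, abs_of_pos (log_pos one_lt_two), ← div_div (1 : ℝ)]
  gcongr
  exact abs_log_div_mul_le hc (Nat.div_pos hk hc) (hN j).1 (hN j).2

end

theorem itH_close_to_itHinf_perm {X : Type*} [Fintype X] (f : Equiv.Perm X) (k : ℕ)
    (hk4n : 4 * Fintype.card X ≤ k) (hn77 : 77 ≤ 4 * Fintype.card X) :
    |itH X (⇑f) k -
        (1 / (Fintype.card X : ℝ)) *
          ∑ x : X, Real.logb 2 (Function.minimalPeriod (⇑f) x)| ≤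
      3 * (Fintype.card X : ℝ) * Real.logb 2 (Fintype.card X) / k := by
  have hper : ∀ x, x ∈ periodicPts f := f.injective.mem_periodicPts
  have hcard : ∀ x, minimalPeriod f x ≤ Fintype.card X := fun x => minimalPeriod_le_card
  have hpoint : ∀ x ∈ (univ : Finset X), |itHAt f k x - logb 2 (minimalPeriod f x)| ≤
      3 * Fintype.card X * logb 2 (Fintype.card X) / k := fun x _ =>
    (abs_itHAt_sub_logb_minimalPeriod_le f (hper x) (by linarith [hcard x])).trans
      (one_div_mul_log_two_le (minimalPeriod_pos_of_mem_periodicPts (hper x))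
        (by linarith [hcard x]) (hcard x) (by omega))
  have hsplit : itH X f k - 1 / (Fintype.card X : ℝ) * ∑ x, logb 2 (minimalPeriod f x) =
      (∑ x, (itHAt f k x - logb 2 (minimalPeriod f x))) / #(univ : Finset X) := by
    rw [itH_eq_sum_itHAt_div, sum_sub_distrib, card_univ, sub_div, one_div_mul_eq_div]
  rw [hsplit]
  exact abs_sum_div_card_le (card_pos.1 (by rw [card_univ]; omega)) hpoint
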